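/- Existence of a minimal-reduction-respecting optimal policy: every single-decision SCIM has an optimal policy that depends only on its requisite observations, i.e. a policy that is constant in the values of all nonrequisite parents of the decision. -/

import Mathlib

attribute [local instance] Classical.propDecidable

noncomputable section

/-- Acyclicity of a directed graph. -/
def Acyclic {V : Type} (E : V → V → Prop) : Prop := ∀ v, ¬ Relation.TransGen E v v

/-- A walk in the digraph: a nonempty list of vertices where consecutive
vertices are joined by an edge in some direction. -/
def IsWalk {V : Type} (E : V → V → Prop) (p : List V) : Prop :=
  p ≠ [] ∧ p.Chain' (fun a b => E a b ∨ E b a)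

/-- A consecutive triple `a, b, c` blocks a path w.r.t. `S` if `b` is a collider
with no descendant (including itself) in `S`, or a non-collider in `S`. -/
def BlockedTriple {V : Type} (E : V → V → Prop) (S : Set V) (a b c : V) : Prop :=
  (E a b ∧ E c b ∧ ∀ w, Relation.ReflTransGen E b w → w ∉ S) ∨
  (¬ (E a b ∧ E c b) ∧ b ∈ S)

/-- A path is d-separated (blocked) by `S`. -/
def BlocksPath {V : Type} (E : V → V → Prop) (S : Set V) (p : List V) : Prop :=
  (∃ x, p.head? = some x ∧ x ∈ S) ∨ (∃ x, p.getLast? = some x ∧ x ∈ S) ∨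
  (∃ l a b c r, p = l ++ a :: b :: c :: r ∧ BlockedTriple E S a b c)

/-- `A` is d-separated from `B` given `S`. -/
def DSep {V : Type} (E : V → V → Prop) (A B S : Set V) : Prop :=
  ∀ p : List V, IsWalk E p → (∃ a ∈ A, p.head? = some a) →
    (∃ b ∈ B, p.getLast? = some b) → BlocksPath E S p

/-- An observation `X ∈ Pa_D` is requisite in the graph `E` with decision `D` and
utility nodes `U` if it is d-connected to the downstream utilities `U ∩ Desc(D)`
given the other observations and the decision, `(Pa_D ∪ {D}) \ {X}`. -/
def RequisiteG {V : Type} (E : V → V → Prop) (D : V) (U : Set V) (X : V) : Prop :=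
  E X D ∧ ¬ DSep E {X} {u | u ∈ U ∧ Relation.ReflTransGen E D u}
      {v | (E v D ∧ v ≠ X) ∨ v = D}

/-- The edge relation of the minimal reduction: all information links from
nonrequisite observations are removed. -/
def ReducedEdge {V : Type} (E : V → V → Prop) (D : V) (U : Set V) : V → V → Prop :=
  fun a b => E a b ∧ (b = D → RequisiteG E D U a)

variable {V : Type} [Fintype V] [DecidableEq V]

/-- A single-decision structural causal influence model (SCIM): a causal
influence diagram (DAG with a decision node `D` and childless utility nodes
`Util` whose values are interpreted in `ℝ` via `utilReal`), finite nonempty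
domains, structural functions for all non-decision nodes depending only on
parents, and mutually independent finitely-supported exogenous variables. -/
structure SCIM (V : Type) [Fintype V] [DecidableEq V] where
  Edge : V → V → Prop
  acyclic : Acyclic Edge
  D : V
  Util : Finset V
  utilNotD : D ∉ Util
  utilNoChild : ∀ u ∈ Util, ∀ v, ¬ Edge u v
  Dom : V → Type
  domFin : ∀ v, Fintype (Dom v)
  domNE : ∀ v, Nonempty (Dom v)
  utilReal : (u : V) → Dom u → ℝ
  ExoDom : V → Type
  exoFin : ∀ v, Fintype (ExoDom v)
  exoNE : ∀ v, Nonempty (ExoDom v)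
  f : (v : V) → ((p : V) → Dom p) → ExoDom v → Dom v
  localDep : ∀ v a a' e, (∀ p, Edge p v → a p = a' p) → f v a e = f v a' e
  P : (v : V) → ExoDom v → ℝ
  Pnonneg : ∀ v e, 0 ≤ P v e
  Psum : ∀ v, ∑ e ∈ (exoFin v).elems, P v e = 1

namespace SCIM

variable (M : SCIM V)

/-- Joint (product) probability of an exogenous setting. -/
def Pjoint (ε : ∀ v, M.ExoDom v) : ℝ := ∏ v, M.P v (ε v)

/-- All exogenous settings. -/
def exoElems : Finset (∀ v, M.ExoDom v) :=
  letI := M.exoFin; Finset.univ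

/-- A default assignment of values. -/
def dflt : ∀ v, M.Dom v := fun v => (M.domNE v).some

/-- `a` solves the system of structural equations `g` at exogenous setting `ε`. -/
def Solves (g : (v : V) → ((p : V) → M.Dom p) → M.ExoDom v → M.Dom v)
    (ε : ∀ v, M.ExoDom v) (a : ∀ v, M.Dom v) : Prop :=
  ∀ v, a v = g v a (ε v)

/-- The (unique, by acyclicity) solution of the structural equations `g`
at `ε`: the values of all endogenous variables obtained by recursive
application of the structural functions. -/
def sol (g : (v : V) → ((p : V) → M.Dom p) → M.ExoDom v → M.Dom v)
    (ε : ∀ v, M.ExoDom v) : ∀ v, M.Dom v :=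
  if h : ∃ a, M.Solves g ε a then h.choose else M.dflt

/-- Replace the structural function at node `X` by `gX` (a soft intervention). -/
def replaceAt (g : (v : V) → ((p : V) → M.Dom p) → M.ExoDom v → M.Dom v) (X : V)
    (gX : ((p : V) → M.Dom p) → M.ExoDom X → M.Dom X) :
    (v : V) → ((p : V) → M.Dom p) → M.ExoDom v → M.Dom v :=
  fun v => if h : v = X then (by subst h; exact gX) else g v

/-- Hard intervention do(`X` = `x`): constant functions on `X`. -/
def doSet (g : (v : V) → ((p : V) → M.Dom p) → M.ExoDom v → M.Dom v)
    (X : Set V) (x : ∀ v, M.Dom v) :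
    (v : V) → ((p : V) → M.Dom p) → M.ExoDom v → M.Dom v :=
  fun v => if v ∈ X then fun _ _ => x v else g v

/-- A policy: a structural function for `D` that depends only on the
observations `Pa_D` (and the exogenous variable of `D`). -/
def IsPolicy (π : ((p : V) → M.Dom p) → M.ExoDom M.D → M.Dom M.D) : Prop :=
  ∀ a a' e, (∀ p, M.Edge p M.D → a p = a' p) → π a e = π a' e

/-- The policy-completed system of structural functions. -/
def gpol (π : ((p : V) → M.Dom p) → M.ExoDom M.D → M.Dom M.D) :
    (v : V) → ((p : V) → M.Dom p) → M.ExoDom v → M.Dom v :=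
  M.replaceAt M.f M.D π

/-- Total utility of an assignment: the sum of the utility-node values. -/
def TotalU (a : ∀ v, M.Dom v) : ℝ := ∑ u ∈ M.Util, M.utilReal u (a u)

/-- Expected total utility of a system of structural equations `g`. -/
def EUg (g : (v : V) → ((p : V) → M.Dom p) → M.ExoDom v → M.Dom v) : ℝ :=
  ∑ ε ∈ M.exoElems, M.Pjoint ε * M.TotalU (M.sol g ε)

/-- Expected total utility of a policy. -/
def EU (π : ((p : V) → M.Dom p) → M.ExoDom M.D → M.Dom M.D) : ℝ :=
  M.EUg (M.gpol π)

/-- An optimal policy maximizes expected total utility. -/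
def IsOptimal (π : ((p : V) → M.Dom p) → M.ExoDom M.D → M.Dom M.D) : Prop :=
  M.IsPolicy π ∧ ∀ π', M.IsPolicy π' → M.EU π' ≤ M.EU π

/-- Probability of an event over exogenous settings. -/
def PrEv (Ev : (∀ v, M.ExoDom v) → Prop) : ℝ :=
  ∑ ε ∈ M.exoElems, if Ev ε then M.Pjoint ε else 0

/-- Conditional expectation of `h` given the event `Ev`. -/
def condExp (h : (∀ v, M.ExoDom v) → ℝ) (Ev : (∀ v, M.ExoDom v) → Prop) : ℝ :=
  (∑ ε ∈ M.exoElems, if Ev ε then M.Pjoint ε * h ε else 0) / M.PrEv Ev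

/-- Conditional probability of `h` given `Ev`. -/
def condProb (h Ev : (∀ v, M.ExoDom v) → Prop) : ℝ :=
  M.PrEv (fun ε => h ε ∧ Ev ε) / M.PrEv Ev

/-- The event that the decision context (the observations `Pa_D`) takes the
values `pa`, under policy `π`. -/
def CtxEvent (π : ((p : V) → M.Dom p) → M.ExoDom M.D → M.Dom M.D)
    (pa : ∀ v, M.Dom v) (ε : ∀ v, M.ExoDom v) : Prop :=
  ∀ p, M.Edge p M.D → M.sol (M.gpol π) ε p = pa p

/-- The potential response under the hard intervention do(`X` = `x`),
in the policy-completed model: an assignment to all variables. -/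
def response (π : ((p : V) → M.Dom p) → M.ExoDom M.D → M.Dom M.D)
    (X : V) (x : M.Dom X) (ε : ∀ v, M.ExoDom v) : ∀ v, M.Dom v :=
  M.sol (M.doSet (M.gpol π) {X} (Function.update M.dflt X x)) ε

/-- The nested-counterfactual assignment realizing `U_{X_d}`: intervene on `X`
with the value `X_d(ε)` it would take under do(`D` = `d`). -/
def nestedSol (π : ((p : V) → M.Dom p) → M.ExoDom M.D → M.Dom M.D)
    (X : V) (d : M.Dom M.D) (ε : ∀ v, M.ExoDom v) : ∀ v, M.Dom v :=
  M.response π X (M.response π M.D d ε X) ε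

/-- Instrumental control incentive on `X`: in some decision context `pa`
(of positive probability), every optimal policy has
`E[U_{X_d} | pa] ≠ E[U | pa]` for some `d`. -/
def HasICI (X : V) : Prop :=
  ∃ pa : ∀ v, M.Dom v, ∀ π, M.IsOptimal π →
    0 < M.PrEv (M.CtxEvent π pa) ∧
    ∃ d : M.Dom M.D,
      M.condExp (fun ε => M.TotalU (M.nestedSol π X d ε)) (M.CtxEvent π pa) ≠
      M.condExp (fun ε => M.TotalU (M.sol (M.gpol π) ε)) (M.CtxEvent π pa)

/-- A policy that does not use the information link `X → D`. -/
def IsPolicyWithout (X : V)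
    (π : ((p : V) → M.Dom p) → M.ExoDom M.D → M.Dom M.D) : Prop :=
  M.IsPolicy π ∧ ∀ a a' e, (∀ p, M.Edge p M.D → p ≠ X → a p = a' p) → π a e = π a' e

/-- Counterfactual fairness of policy `π` w.r.t. sensitive attribute `A`:
`Pr(D_{a'} = d | pa_D, a) = Pr(D = d | pa_D, a)` for all `d`, contexts `pa_D`,
and attribute values `a, a'` with positive probability of the conditioning event. -/
def CFair (π : ((p : V) → M.Dom p) → M.ExoDom M.D → M.Dom M.D) (A : V) : Prop :=
  ∀ (d : M.Dom M.D) (pa : ∀ v, M.Dom v) (a a' : M.Dom A),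
    0 < M.PrEv (fun ε => M.CtxEvent π pa ε ∧ M.sol (M.gpol π) ε A = a) →
    M.condProb (fun ε => M.response π A a' ε M.D = d)
        (fun ε => M.CtxEvent π pa ε ∧ M.sol (M.gpol π) ε A = a) =
    M.condProb (fun ε => M.sol (M.gpol π) ε M.D = d)
        (fun ε => M.CtxEvent π pa ε ∧ M.sol (M.gpol π) ε A = a)

end SCIM

/-! Fix values `σ` of the requisite observations and `d` of the decision, and cut the graph at
them. A Bayes-ball search from the downstream utilities that treats the requisite observations and
`D` as observed never reaches a nonrequisite observation `Y`: a shortest active walk from such a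
`Y` would violate its d-separation from the utilities, since a noncollider on it in
`(Pa_D ∪ {D}) \ {Y}` is again nonrequisite. The exogenous variables therefore split into two
independent groups, one driving the nonrequisite observations and the other the downstream
utilities. Consequently, on the event that the observations equal `ρ` and `ε_D = e`, the expected
downstream utility of `d` is `w(ρ, e) * V(ρ|_R, d)` with `w ≥ 0`, and a decision maximising
`V(σ, ·)` for each requisite context `σ` yields an optimal policy that reads only the requisite
observations. -/

open Relation

theorem sum_pi_weight_mul_mul {ι : Type*} [Fintype ι] [DecidableEq ι] {Ω : ι → Type*}
    [∀ i, Fintype (Ω i)] (w : ∀ i, Ω i → ℝ) (hw : ∀ i, ∑ x, w i x = 1) (s : Set ι)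
    (f g : (∀ i, Ω i) → ℝ)
    (hf : ∀ ω ω', (∀ i ∈ s, ω i = ω' i) → f ω = f ω')
    (hg : ∀ ω ω', (∀ i ∉ s, ω i = ω' i) → g ω = g ω') :
    ∑ ω, (∏ i, w i (ω i)) * (f ω * g ω) =
      (∑ ω, (∏ i, w i (ω i)) * f ω) * ∑ ω, (∏ i, w i (ω i)) * g ω := by
  set W : (∀ i, Ω i) → ℝ := fun ω => ∏ i, w i (ω i)
  have hW : ∑ ω, W ω = 1 := by
    simp only [W, ← Fintype.prod_sum, hw, Finset.prod_const_one]
  -- exchanging the `s`-coordinates of two independent samples preserves their joint weight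
  let swap : (∀ i, Ω i) × (∀ i, Ω i) → (∀ i, Ω i) × (∀ i, Ω i) := fun x =>
    (fun i => if i ∈ s then x.1 i else x.2 i, fun i => if i ∈ s then x.2 i else x.1 i)
  have hswap : Function.Involutive swap := fun x => by
    refine Prod.ext (funext fun i => ?_) (funext fun i => ?_) <;>
      by_cases h : i ∈ s <;> simp [swap, h]
  have hWswap : ∀ x, W (swap x).1 * W (swap x).2 = W x.1 * W x.2 := fun x => by
    simp only [W, ← Finset.prod_mul_distrib]
    refine Finset.prod_congr rfl fun i _ => ?_
    by_cases h : i ∈ s <;> simp [swap, h, mul_comm]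
  calc ∑ ω, W ω * (f ω * g ω)
      = ∑ x : (∀ i, Ω i) × (∀ i, Ω i), W x.1 * W x.2 * (f x.1 * g x.1) := by
        rw [Fintype.sum_prod_type]
        simp only [← Finset.sum_mul, ← Finset.mul_sum, hW, mul_one]
    _ = ∑ x : (∀ i, Ω i) × (∀ i, Ω i), W x.1 * f x.1 * (W x.2 * g x.2) := by
        rw [← hswap.bijective.sum_comp fun x => W x.1 * f x.1 * (W x.2 * g x.2)]
        refine Finset.sum_congr rfl fun x _ => ?_
        rw [hf (swap x).1 x.1 fun i hi => by simp [swap, hi],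
          hg (swap x).2 x.1 fun i hi => by simp [swap, hi], ← hWswap x]
        ring
    _ = _ := by rw [Fintype.sum_prod_type, Finset.sum_mul_sum]

namespace SCIM

section Solutions

variable (M : SCIM V)

def IsLocal (g : (v : V) → ((p : V) → M.Dom p) → M.ExoDom v → M.Dom v) : Prop :=
  ∀ v a a' e, (∀ p, M.Edge p v → a p = a' p) → g v a e = g v a' e

theorem wellFounded_edge : WellFounded M.Edge :=
  have : IsTrans V (TransGen M.Edge) := ⟨fun _ _ _ => TransGen.trans⟩
  have : Std.Irrefl (TransGen M.Edge) := ⟨M.acyclic⟩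
  Subrelation.wf TransGen.single (Finite.wellFounded_of_trans_of_irrefl (TransGen M.Edge))

theorem edge_irrefl (v : V) : ¬ M.Edge v v := fun h => M.acyclic v (.single h)

theorem edge_asymm {a b : V} (h : M.Edge a b) : ¬ M.Edge b a :=
  fun h' => M.acyclic a (.head h (.single h'))

theorem not_reflTransGen_of_edge {a b : V} (h : M.Edge a b) : ¬ ReflTransGen M.Edge b a :=
  fun h' => M.acyclic a (.head' h h')

variable {M}

theorem exists_solves {g} (hg : M.IsLocal g) (ε : ∀ v, M.ExoDom v) : ∃ a, M.Solves g ε a := by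
  let F : ∀ v, (∀ p, M.Edge p v → M.Dom p) → M.Dom v :=
    fun v rec => g v (fun p => if h : M.Edge p v then rec p h else M.dflt p) (ε v)
  refine ⟨M.wellFounded_edge.fix F, fun v => ?_⟩
  rw [M.wellFounded_edge.fix_eq F v]
  exact hg v _ _ (ε v) fun p hp => by simp [F, hp]

theorem Solves.unique {g} (hg : M.IsLocal g) {ε a b} (ha : M.Solves g ε a)
    (hb : M.Solves g ε b) : a = b := by
  funext v
  induction v using M.wellFounded_edge.induction with
  | _ v ih => rw [ha v, hb v]; exact hg v a b (ε v) ih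

theorem solves_sol {g} (hg : M.IsLocal g) (ε) : M.Solves g ε (M.sol g ε) := by
  have h := exists_solves hg ε
  rw [sol, dif_pos h]
  exact h.choose_spec

theorem sol_apply {g} (hg : M.IsLocal g) (ε v) : M.sol g ε v = g v (M.sol g ε) (ε v) :=
  solves_sol hg ε v

theorem sol_eq_of_solves {g} (hg : M.IsLocal g) {ε a} (ha : M.Solves g ε a) : M.sol g ε = a :=
  (solves_sol hg ε).unique hg ha

variable (M) in
def EdgeOff (C : Set V) (a b : V) : Prop := M.Edge a b ∧ a ∉ C ∧ b ∉ C

theorem reflTransGen_edge_of_edgeOff {C : Set V} {a b : V} (h : ReflTransGen (M.EdgeOff C) a b) :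
    ReflTransGen M.Edge a b :=
  ReflTransGen.mono (fun _ _ h => h.1) _ _ h

theorem sol_eq_sol_of_eqOn_ancestors (C : Set V) {g g'} (hg : M.IsLocal g) (hg' : M.IsLocal g')
    (hgg' : ∀ v ∉ C, g v = g' v) {u : V} (hu : u ∉ C)
    (hconst : ∀ c ∈ C, ∀ v, M.Edge c v → v ∉ C → ReflTransGen (M.EdgeOff C) v u →
      ∃ x : M.Dom c, (∀ a e, g c a e = x) ∧ (∀ a e, g' c a e = x))
    {ε ε' : ∀ v, M.ExoDom v}
    (hεε' : ∀ v ∉ C, ReflTransGen (M.EdgeOff C) v u → ε v = ε' v) :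
    M.sol g ε u = M.sol g' ε' u := by
  suffices h : ∀ v ∉ C, ReflTransGen (M.EdgeOff C) v u → M.sol g ε v = M.sol g' ε' v from
    h u hu .refl
  intro v
  induction v using M.wellFounded_edge.induction with
  | _ v ih =>
    intro hvC hvu
    rw [sol_apply hg, sol_apply hg', ← hgg' v hvC, ← hεε' v hvC hvu]
    refine hg v _ _ (ε v) fun p hp => ?_
    by_cases hpC : p ∈ C
    · obtain ⟨x, hx, hx'⟩ := hconst p hpC v hp hvC hvu
      rw [sol_apply hg, sol_apply hg', hx, hx']
    · exact ih p hp hpC (.head ⟨hp, hpC, hvC⟩ hvu)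

end Solutions

section Interventions

variable {M : SCIM V}

theorem isLocal_f : M.IsLocal M.f := M.localDep

theorem IsLocal.doSet {g} (hg : M.IsLocal g) (X : Set V) (x : ∀ v, M.Dom v) :
    M.IsLocal (M.doSet g X x) := by
  intro v a a' e h
  by_cases hv : v ∈ X
  · simp only [SCIM.doSet, if_pos hv]
  · simp only [SCIM.doSet, if_neg hv]
    exact hg v a a' e h

theorem gpol_self (π) : M.gpol π M.D = π := by
  simp only [gpol, replaceAt, dif_pos]

theorem gpol_of_ne (π) {v : V} (h : v ≠ M.D) : M.gpol π v = M.f v := by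
  simp only [gpol, replaceAt, dif_neg h]

theorem IsPolicy.isLocal_gpol {π} (hπ : M.IsPolicy π) : M.IsLocal (M.gpol π) := by
  intro v a a' e h
  by_cases hv : v = M.D
  · subst hv
    rw [gpol_self]
    exact hπ a a' e h
  · rw [gpol_of_ne π hv]
    exact M.localDep v a a' e h

variable (M) in
def doDecision (d : M.Dom M.D) := M.doSet M.f {M.D} (Function.update M.dflt M.D d)

theorem isLocal_doDecision (d) : M.IsLocal (M.doDecision d) := isLocal_f.doSet _ _

theorem doDecision_self (d a e) : M.doDecision d M.D a e = d := by
  simp [doDecision, SCIM.doSet]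

theorem doDecision_of_ne (d) {v : V} (h : v ≠ M.D) : M.doDecision d v = M.f v := by
  simp [doDecision, SCIM.doSet, h]

theorem sol_eq_of_not_reflTransGen_decision {g g'} (hg : M.IsLocal g) (hg' : M.IsLocal g')
    (hgg' : ∀ v ≠ M.D, g v = g' v) (ε) {u : V} (hu : ¬ ReflTransGen M.Edge M.D u) :
    M.sol g ε u = M.sol g' ε u := by
  have huD : u ∉ ({M.D} : Set V) := fun h => hu (h ▸ .refl)
  refine sol_eq_sol_of_eqOn_ancestors {M.D} hg hg' hgg' huD ?_ fun _ _ _ => rfl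
  rintro c rfl v hDv - hvu
  exact (hu (.head hDv (reflTransGen_edge_of_edgeOff hvu))).elim

theorem sol_gpol_of_not_reflTransGen_decision {π} (hπ : M.IsPolicy π) (ε) {u : V}
    (hu : ¬ ReflTransGen M.Edge M.D u) : M.sol (M.gpol π) ε u = M.sol M.f ε u :=
  sol_eq_of_not_reflTransGen_decision hπ.isLocal_gpol isLocal_f (fun _ => gpol_of_ne π) ε hu

theorem sol_doDecision_of_not_reflTransGen_decision (d ε) {u : V}
    (hu : ¬ ReflTransGen M.Edge M.D u) : M.sol (M.doDecision d) ε u = M.sol M.f ε u :=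
  sol_eq_of_not_reflTransGen_decision (isLocal_doDecision d) isLocal_f
    (fun _ => doDecision_of_ne d) ε hu

theorem sol_gpol_eq_sol_doDecision {π} (hπ : M.IsPolicy π) (ε) :
    M.sol (M.gpol π) ε = M.sol (M.doDecision (M.sol (M.gpol π) ε M.D)) ε := by
  refine (sol_eq_of_solves (isLocal_doDecision _) fun v => ?_).symm
  by_cases hv : v = M.D
  · subst hv
    rw [doDecision_self]
  · rw [doDecision_of_ne _ hv, ← gpol_of_ne π hv]
    exact sol_apply hπ.isLocal_gpol ε v

theorem sol_gpol_decision {π} (hπ : M.IsPolicy π) (ε) :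
    M.sol (M.gpol π) ε M.D = π (M.sol M.f ε) (ε M.D) := by
  rw [sol_apply hπ.isLocal_gpol, gpol_self]
  exact hπ _ _ _ fun p hp =>
    sol_gpol_of_not_reflTransGen_decision hπ ε (M.not_reflTransGen_of_edge hp)

end Interventions

section BayesBall

variable (M : SCIM V)

def downstreamUtil : Set V := {u | u ∈ (M.Util : Set V) ∧ ReflTransGen M.Edge M.D u}

def requisite : Set V := {v | RequisiteG M.Edge M.D M.Util v}

def nonrequisite : Set V := {v | M.Edge v M.D ∧ v ∉ M.requisite}

def clamped : Set V := M.requisite ∪ {M.D}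

def relevant : Set V :=
  {v | ∃ t ∈ M.nonrequisite ∪ M.downstreamUtil ∪ M.requisite,
    ReflTransGen (M.EdgeOff {M.D}) v t}

def ActiveTriple (a b c : V) : Prop :=
  (M.Edge a b ∧ M.Edge c b → ∃ z ∈ M.requisite, ReflTransGen M.Edge b z) ∧
  (¬ (M.Edge a b ∧ M.Edge c b) → b ∉ M.clamped)

def ActiveTriples : List V → Prop
  | a :: b :: c :: l => M.ActiveTriple a b c ∧ ActiveTriples (b :: c :: l)
  | _ => True

def IsActiveUtilWalk (p : List V) : Prop :=
  p.IsChain (SymmGen M.Edge) ∧ M.ActiveTriples p ∧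
    ∃ u ∈ M.downstreamUtil, p.getLast? = some u

def IsUtilTrail (v : V) (l : List V) : Prop :=
  M.IsActiveUtilWalk (v :: l) ∧ ∀ x w, M.Edge x v → l.head? = some w → M.ActiveTriple x v w

/-- The nodes reached from the downstream utilities by a Bayes-ball search that treats
`M.clamped` as observed. Moves down are restricted to `M.relevant`, so that every node reached
starts an active walk to a downstream utility. -/
inductive UtilConnected : V → Prop
  | util {u} : u ∈ M.downstreamUtil → UtilConnected u
  | up {v p} : UtilConnected v → M.Edge p v → p ∉ M.clamped → UtilConnected p
  | down {v c} : UtilConnected v → M.Edge v c → c ∉ M.clamped → c ∈ M.relevant →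
      UtilConnected c
  | moral {p r q} : UtilConnected p → M.Edge p r → r ∈ M.requisite → M.Edge q r →
      q ∉ M.clamped → UtilConnected q

variable {M}

theorem not_clamped_of_mem_downstreamUtil {u : V} (hu : u ∈ M.downstreamUtil) :
    u ∉ M.clamped := by
  rintro (hr | rfl)
  · exact M.utilNoChild u hu.1 M.D hr.1
  · exact M.utilNotD hu.1

theorem decision_not_mem_requisite : M.D ∉ M.requisite := fun hr => M.edge_irrefl _ hr.1

theorem not_clamped_of_mem_nonrequisite {Y : V} (hY : Y ∈ M.nonrequisite) : Y ∉ M.clamped := by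
  rintro (hr | rfl)
  · exact hY.2 hr
  · exact M.edge_irrefl _ hY.1

theorem UtilConnected.not_clamped {v : V} (h : M.UtilConnected v) : v ∉ M.clamped := by
  induction h with
  | util hu => exact not_clamped_of_mem_downstreamUtil hu
  | up _ _ hp | down _ _ hp | moral _ _ _ _ hp => exact hp

theorem activeTriple_of_edge_right {a b c : V} (hbc : M.Edge b c) (hb : b ∉ M.clamped) :
    M.ActiveTriple a b c :=
  ⟨fun h => (M.edge_asymm hbc h.2).elim, fun _ => hb⟩

theorem activeTriple_of_edge_left {a b c : V} (hba : M.Edge b a) (hb : b ∉ M.clamped) :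
    M.ActiveTriple a b c :=
  ⟨fun h => (M.edge_asymm hba h.1).elim, fun _ => hb⟩

theorem ActiveTriples.tail {x : V} :
    ∀ {l : List V}, M.ActiveTriples (x :: l) → M.ActiveTriples l
  | [], _ | [_], _ | [_, _], _ => trivial
  | _ :: _ :: _ :: _, h => h.2

theorem ActiveTriples.of_append {r : List V} :
    ∀ {l : List V}, M.ActiveTriples (l ++ r) → M.ActiveTriples r
  | [], h => h
  | _ :: _, h => ActiveTriples.of_append h.tail

theorem ActiveTriples.activeTriple {l r : List V} {a b c : V}
    (h : M.ActiveTriples (l ++ a :: b :: c :: r)) : M.ActiveTriple a b c :=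
  h.of_append.1

theorem isActiveUtilWalk_singleton {u : V} (hu : u ∈ M.downstreamUtil) :
    M.IsActiveUtilWalk [u] :=
  ⟨.singleton _, trivial, u, hu, rfl⟩

theorem IsActiveUtilWalk.cons {x v : V} {l : List V} (h : M.IsActiveUtilWalk (v :: l))
    (hxv : SymmGen M.Edge x v) (htri : ∀ w, l.head? = some w → M.ActiveTriple x v w) :
    M.IsActiveUtilWalk (x :: v :: l) := by
  obtain ⟨hchain, htris, u, hu, hlast⟩ := h
  refine ⟨hchain.cons_cons hxv, ?_, u, hu, by rwa [List.getLast?_cons_cons]⟩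
  match l, htri, htris with
  | [], _, _ => trivial
  | w :: _, htri, htris => exact ⟨htri w rfl, htris⟩

theorem IsActiveUtilWalk.cons_of_edge {x v : V} {l : List V} (h : M.IsActiveUtilWalk (v :: l))
    (hvx : M.Edge v x) (hv : v ∉ M.clamped) : M.IsActiveUtilWalk (x :: v :: l) :=
  h.cons (.inr hvx) fun _ _ => activeTriple_of_edge_left hvx hv

theorem IsActiveUtilWalk.of_append {l r : List V} {x : V} (h : M.IsActiveUtilWalk (l ++ x :: r)) :
    M.IsActiveUtilWalk (x :: r) := by
  obtain ⟨hchain, htris, u, hu, hlast⟩ := h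
  refine ⟨(List.isChain_append.1 hchain).2.1, htris.of_append, u, hu, ?_⟩
  rwa [List.getLast?_append_of_ne_nil _ (List.cons_ne_nil _ _)] at hlast

/-- On a shortest such walk, a noncollider in `(Pa_D ∪ {D}) \ {Y}` would be another
nonrequisite observation starting a shorter one; so the walk would d-connect `Y` to the
downstream utilities. -/
theorem not_isActiveUtilWalk_of_mem_nonrequisite :
    ∀ {Y : V} {l : List V}, Y ∈ M.nonrequisite → ¬ M.IsActiveUtilWalk (Y :: l) := by
  intro Y l
  induction hn : l.length using Nat.strong_induction_on generalizing Y l with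
  | _ n ih =>
  intro hY hwalk
  have hdsep : DSep M.Edge {Y} M.downstreamUtil {v | (M.Edge v M.D ∧ v ≠ Y) ∨ v = M.D} :=
    not_not.1 fun h => hY.2 ⟨hY.1, h⟩
  obtain ⟨hchain, htris, u, hu, hlast⟩ := id hwalk
  rcases hdsep (Y :: l) ⟨List.cons_ne_nil _ _, hchain⟩ ⟨Y, rfl, rfl⟩ ⟨u, hu, hlast⟩ with
    ⟨x, hx, hxS⟩ | ⟨x, hx, hxS⟩ | ⟨l₁, a, b, c, r, hsplit, hblocked⟩
  · obtain rfl := Option.some.inj hx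
    exact not_clamped_of_mem_nonrequisite hY
      (hxS.elim (fun h => (h.2 rfl).elim) fun h => .inr h)
  · obtain rfl := Option.some.inj (hx.symm.trans hlast)
    rcases hxS with ⟨hxD, -⟩ | rfl
    · exact M.utilNoChild x hu.1 M.D hxD
    · exact M.utilNotD hu.1
  · have hactive : M.ActiveTriple a b c := (hsplit ▸ htris).activeTriple
    rcases hblocked with ⟨hab, hcb, hnodesc⟩ | ⟨hnc, hbS⟩
    · obtain ⟨z, hz, hbz⟩ := hactive.1 ⟨hab, hcb⟩
      exact hnodesc z hbz (.inl ⟨hz.1, fun h => hY.2 (h ▸ hz)⟩)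
    · have hb := hactive.2 hnc
      have hbN : b ∈ M.nonrequisite :=
        ⟨hbS.elim (·.1) fun h => (hb (.inr h)).elim, fun h => hb (.inl h)⟩
      rw [hsplit, ← List.singleton_append, ← List.append_assoc] at hwalk
      have hlen : (c :: r).length < n := by
        have := congrArg List.length hsplit
        simp only [List.length_cons, List.length_append] at this ⊢
        omega
      exact ih _ hlen rfl hbN hwalk.of_append

theorem IsUtilTrail.cons_of_edge {a b : V} {l : List V} (h : M.IsUtilTrail b l)
    (hab : M.Edge a b) (ha : a ∉ M.clamped) : M.IsUtilTrail a (b :: l) := by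
  refine ⟨h.1.cons (.inl hab) fun w hw => h.2 a w hab hw, fun x w _ hw => ?_⟩
  obtain rfl := Option.some.inj hw
  exact activeTriple_of_edge_right hab ha

theorem IsUtilTrail.of_reflTransGen {c t : V} {l : List V} (h : M.IsUtilTrail t l)
    (hct : ReflTransGen (M.EdgeOff M.clamped) c t) : ∃ l', M.IsUtilTrail c l' := by
  induction hct using ReflTransGen.head_induction_on with
  | refl => exact ⟨l, h⟩
  | head hab _ ih =>
    obtain ⟨l', hl'⟩ := ih
    exact ⟨_, hl'.cons_of_edge hab.1 hab.2.1⟩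

theorem IsActiveUtilWalk.of_reflTransGen {c t : V} {l : List V}
    (h : M.IsActiveUtilWalk (c :: l)) (hct : ReflTransGen (M.EdgeOff M.clamped) c t) :
    ∃ l', M.IsActiveUtilWalk (t :: l') := by
  induction hct with
  | refl => exact ⟨l, h⟩
  | tail _ hbt ih =>
    obtain ⟨l', hl'⟩ := ih
    exact ⟨_, hl'.cons_of_edge hbt.1 hbt.2.1⟩

theorem reflTransGen_edgeOff_clamped {c t : V}
    (hc : ∀ z ∈ M.requisite, ¬ ReflTransGen M.Edge c z)
    (hct : ReflTransGen (M.EdgeOff {M.D}) c t) : ReflTransGen (M.EdgeOff M.clamped) c t := by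
  induction hct using ReflTransGen.head_induction_on with
  | refl => exact .refl
  | @head a b hab hbt ih =>
    have hb : ∀ z ∈ M.requisite, ¬ ReflTransGen M.Edge b z :=
      fun z hz hbz => hc z hz (.head hab.1 hbz)
    refine .head ⟨hab.1, ?_, ?_⟩ (ih hb)
    · rintro (ha | ha)
      exacts [hc a ha .refl, hab.2.1 ha]
    · rintro (hb' | hb')
      exacts [hb b hb' .refl, hab.2.2 hb']

theorem IsUtilTrail.exists_of_edge {v c : V} {l : List V} (h : M.IsUtilTrail v l)
    (hv : v ∉ M.clamped) (hvc : M.Edge v c) (hcrel : c ∈ M.relevant) :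
    ∃ l', M.IsUtilTrail c l' := by
  by_cases hz : ∃ z ∈ M.requisite, ReflTransGen M.Edge c z
  · refine ⟨v :: l, h.1.cons_of_edge hvc hv, fun x w hxc hw => ?_⟩
    obtain rfl := Option.some.inj hw
    exact ⟨fun _ => hz, fun hnc => (hnc ⟨hxc, hvc⟩).elim⟩
  push Not at hz
  obtain ⟨t, ht, hct⟩ := hcrel
  have hct' := reflTransGen_edgeOff_clamped hz hct
  rcases ht with (htN | htU) | htR
  · obtain ⟨l', hl'⟩ := (h.1.cons_of_edge hvc hv).of_reflTransGen hct'
    exact (not_isActiveUtilWalk_of_mem_nonrequisite htN hl').elim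
  · exact IsUtilTrail.of_reflTransGen
      ⟨isActiveUtilWalk_singleton htU, fun _ _ _ h => nomatch h⟩ hct'
  · exact (hz t htR (reflTransGen_edge_of_edgeOff hct)).elim

theorem UtilConnected.exists_isUtilTrail {v : V} (h : M.UtilConnected v) :
    ∃ l, M.IsUtilTrail v l := by
  induction h with
  | util hu => exact ⟨[], isActiveUtilWalk_singleton hu, fun _ _ _ h => nomatch h⟩
  | up _ hpv hp ih =>
    obtain ⟨l, hl⟩ := ih
    exact ⟨_, hl.cons_of_edge hpv hp⟩
  | down hv hvc _ hcrel ih =>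
    obtain ⟨l, hl⟩ := ih
    exact hl.exists_of_edge hv.not_clamped hvc hcrel
  | moral hp hpr hr hqr hq ih =>
    obtain ⟨l, hl⟩ := ih
    refine ⟨_, (hl.1.cons_of_edge hpr hp.not_clamped).cons (.inl hqr) fun w hw => ?_,
      fun x w _ hw => ?_⟩
    · obtain rfl := Option.some.inj hw
      exact ⟨fun _ => ⟨_, hr, .refl⟩, fun hnc => (hnc ⟨hqr, hpr⟩).elim⟩
    · obtain rfl := Option.some.inj hw
      exact activeTriple_of_edge_right hqr hq

theorem not_utilConnected_of_mem_nonrequisite {Y : V} (hY : Y ∈ M.nonrequisite) :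
    ¬ M.UtilConnected Y := fun h =>
  let ⟨_, hl⟩ := h.exists_isUtilTrail
  not_isActiveUtilWalk_of_mem_nonrequisite hY hl.1

theorem UtilConnected.of_reflTransGen {v w : V} (h : M.UtilConnected w)
    (hvw : ReflTransGen (M.EdgeOff M.clamped) v w) : M.UtilConnected v := by
  induction hvw using ReflTransGen.head_induction_on with
  | refl => exact h
  | head hab _ ih => exact ih.up hab.1 hab.2.1

theorem not_utilConnected_of_reflTransGen {v w : V} (hw : w ∈ M.relevant)
    (hnw : ¬ M.UtilConnected w) (hvw : ReflTransGen (M.EdgeOff M.clamped) v w) :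
    ¬ M.UtilConnected v := by
  induction hvw using ReflTransGen.head_induction_on with
  | refl => exact hnw
  | @head a b hab hbw ih =>
    refine fun ha => ih (ha.down hab.1 hab.2.2 ?_)
    obtain ⟨t, ht, hwt⟩ := hw
    refine ⟨t, ht, .trans (ReflTransGen.mono (fun x y h => ?_) _ _ hbw) hwt⟩
    exact ⟨h.1, fun hx => h.2.1 (.inr hx), fun hy => h.2.2 (.inr hy)⟩

end BayesBall

section Clamping

variable (M : SCIM V)

instance (v : V) : Fintype (M.Dom v) := M.domFin v

instance (v : V) : Nonempty (M.Dom v) := M.domNE v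

instance (v : V) : Fintype (M.ExoDom v) := M.exoFin v

def ObsVal : Type := ∀ p : {v // M.Edge v M.D}, M.Dom p.1

def ReqVal : Type := ∀ r : M.requisite, M.Dom r.1

instance : Fintype M.ObsVal := inferInstanceAs (Fintype (∀ _, _))

instance : Fintype M.ReqVal := inferInstanceAs (Fintype (∀ _, _))

def obsVal (ε : ∀ v, M.ExoDom v) : M.ObsVal := fun p => M.sol M.f ε p

def reqPart (ρ : M.ObsVal) : M.ReqVal := fun r => ρ ⟨r, r.2.1⟩

def extendObs (ρ : M.ObsVal) : ∀ v, M.Dom v :=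
  fun v => if h : M.Edge v M.D then ρ ⟨v, h⟩ else M.dflt v

def clampVal (σ : M.ReqVal) (d : M.Dom M.D) : ∀ v, M.Dom v :=
  Function.update (fun v => if h : v ∈ M.requisite then σ ⟨v, h⟩ else M.dflt v) M.D d

def clampSys (σ : M.ReqVal) (d : M.Dom M.D) :
    (v : V) → ((p : V) → M.Dom p) → M.ExoDom v → M.Dom v :=
  M.doSet M.f M.clamped (M.clampVal σ d)

/-- The value `r` would take in the clamped system if it were not clamped itself. -/
def freeVal (σ : M.ReqVal) (d : M.Dom M.D) (r : V) (ε : ∀ v, M.ExoDom v) : M.Dom r :=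
  M.f r (M.sol (M.clampSys σ d) ε) (ε r)

variable {M}

theorem clampVal_decision (σ d) : M.clampVal σ d M.D = d := Function.update_self ..

theorem clampVal_of_mem_requisite (σ d) {r : V} (hr : r ∈ M.requisite) :
    M.clampVal σ d r = σ ⟨r, hr⟩ := by
  rw [clampVal, Function.update_of_ne fun h => decision_not_mem_requisite (h ▸ hr), dif_pos hr]

theorem isLocal_clampSys (σ d) : M.IsLocal (M.clampSys σ d) := isLocal_f.doSet _ _

theorem clampSys_of_mem (σ d) {v : V} (hv : v ∈ M.clamped) (a e) :
    M.clampSys σ d v a e = M.clampVal σ d v := by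
  rw [clampSys, SCIM.doSet, if_pos hv]

theorem sol_clampSys_of_mem (σ d ε) {v : V} (hv : v ∈ M.clamped) :
    M.sol (M.clampSys σ d) ε v = M.clampVal σ d v := by
  rw [sol_apply (isLocal_clampSys σ d), clampSys_of_mem σ d hv]

theorem clampSys_of_not_mem (σ d) {v : V} (hv : v ∉ M.clamped) : M.clampSys σ d v = M.f v := by
  rw [clampSys, SCIM.doSet, if_neg hv]

theorem obsVal_apply_eq_sol_doDecision (d ε) (p : {v // M.Edge v M.D}) :
    M.obsVal ε p = M.sol (M.doDecision d) ε p :=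
  (sol_doDecision_of_not_reflTransGen_decision d ε (M.not_reflTransGen_of_edge p.2)).symm

theorem sol_doDecision_eq_sol_clampSys_of_obs {ρ : M.ObsVal} {d ε}
    (hρ : ∀ p, M.sol (M.doDecision d) ε p.1 = ρ p) :
    M.sol (M.doDecision d) ε = M.sol (M.clampSys (M.reqPart ρ) d) ε := by
  refine (sol_eq_of_solves (isLocal_clampSys _ d) fun v => ?_).symm
  by_cases hv : v ∈ M.clamped
  · rw [clampSys_of_mem _ d hv]
    rcases hv with hvR | rfl
    · rw [clampVal_of_mem_requisite _ _ hvR]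
      exact hρ ⟨v, hvR.1⟩
    · rw [clampVal_decision, sol_apply (isLocal_doDecision d), doDecision_self]
  · rw [clampSys_of_not_mem _ _ hv, ← doDecision_of_ne d fun h => hv (.inr h)]
    exact sol_apply (isLocal_doDecision d) ε v

theorem sol_doDecision_eq_sol_clampSys_of_freeVal {σ : M.ReqVal} {d ε}
    (hσ : ∀ r (hr : r ∈ M.requisite), M.freeVal σ d r ε = σ ⟨r, hr⟩) :
    M.sol (M.doDecision d) ε = M.sol (M.clampSys σ d) ε := by
  refine sol_eq_of_solves (isLocal_doDecision d) fun v => ?_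
  by_cases hvD : v = M.D
  · subst hvD
    rw [doDecision_self, sol_clampSys_of_mem _ _ _ (.inr rfl), clampVal_decision]
  rw [doDecision_of_ne d hvD]
  by_cases hvR : v ∈ M.requisite
  · rw [sol_clampSys_of_mem _ _ _ (.inl hvR), clampVal_of_mem_requisite _ _ hvR]
    exact (hσ v hvR).symm
  · rw [← clampSys_of_not_mem σ d (by rintro (h | h); exacts [hvR h, hvD h])]
    exact sol_apply (isLocal_clampSys σ d) ε v

theorem obsVal_eq_iff (ρ : M.ObsVal) (d ε) :
    M.obsVal ε = ρ ↔
      (∀ r (hr : r ∈ M.requisite), M.freeVal (M.reqPart ρ) d r ε = ρ ⟨r, hr.1⟩) ∧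
      ∀ Y (hY : Y ∈ M.nonrequisite),
        M.sol (M.clampSys (M.reqPart ρ) d) ε Y = ρ ⟨Y, hY.1⟩ := by
  constructor
  · rintro rfl
    have hsol := sol_doDecision_eq_sol_clampSys_of_obs (ρ := M.obsVal ε) (d := d) (ε := ε)
      fun p => (obsVal_apply_eq_sol_doDecision d ε p).symm
    refine ⟨fun r hr => ?_, fun Y hY => ?_⟩
    · have hrD : r ≠ M.D := fun h => decision_not_mem_requisite (h ▸ hr)
      rw [obsVal_apply_eq_sol_doDecision d, sol_apply (isLocal_doDecision d),
        doDecision_of_ne d hrD, hsol]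
      rfl
    · rw [obsVal_apply_eq_sol_doDecision d, hsol]
  · rintro ⟨hR, hN⟩
    funext p
    rw [obsVal_apply_eq_sol_doDecision d, sol_doDecision_eq_sol_clampSys_of_freeVal hR]
    by_cases hpR : p.1 ∈ M.requisite
    · rw [sol_clampSys_of_mem _ _ _ (.inl hpR), clampVal_of_mem_requisite _ _ hpR]
      rfl
    · exact hN p ⟨p.2, hpR⟩

end Clamping

section Independence

variable (M : SCIM V)

def Linked (r : V) : Prop := ∃ p, M.Edge p r ∧ M.UtilConnected p

/-- In the clamped system, these exogenous coordinates drive the nonrequisite observations and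
the unlinked requisite ones, while those in `utilCoords` drive the downstream utilities and the
linked requisite observations. -/
def obsCoords : Set V :=
  {v | v ∉ M.clamped ∧ ¬ M.UtilConnected v} ∪ {r | r ∈ M.requisite ∧ ¬ M.Linked r}

def utilCoords : Set V := {v | M.UtilConnected v} ∪ {r | r ∈ M.requisite ∧ M.Linked r}

variable {M}

theorem not_mem_utilCoords_of_mem_obsCoords {v : V} (hv : v ∈ M.obsCoords) :
    v ∉ M.utilCoords := by
  rcases hv with ⟨hvC, hvU⟩ | ⟨hvR, hvL⟩ <;> rintro (hU | ⟨hR, hL⟩)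
  exacts [hvU hU, hvC (.inl hR), hU.not_clamped (.inl hvR), hvL hL]

theorem decision_not_mem_utilCoords : M.D ∉ M.utilCoords := by
  rintro (hU | ⟨hR, -⟩)
  exacts [hU.not_clamped (.inr rfl), decision_not_mem_requisite hR]

theorem sol_clampSys_congr_exo (σ d) {ε ε' : ∀ v, M.ExoDom v} {u : V} (hu : u ∉ M.clamped)
    (hεε' : ∀ v ∉ M.clamped, ReflTransGen (M.EdgeOff M.clamped) v u → ε v = ε' v) :
    M.sol (M.clampSys σ d) ε u = M.sol (M.clampSys σ d) ε' u :=
  sol_eq_sol_of_eqOn_ancestors M.clamped (isLocal_clampSys σ d) (isLocal_clampSys σ d)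
    (fun _ _ => rfl) hu
    (fun c hc _ _ _ _ => ⟨M.clampVal σ d c, clampSys_of_mem σ d hc, clampSys_of_mem σ d hc⟩)
    hεε'

theorem sol_clampSys_congr_decision (σ d d' ε) {u : V} (hu : u ∉ M.clamped)
    (hDu : ¬ ReflTransGen M.Edge M.D u) :
    M.sol (M.clampSys σ d) ε u = M.sol (M.clampSys σ d') ε u := by
  refine sol_eq_sol_of_eqOn_ancestors M.clamped (isLocal_clampSys σ d) (isLocal_clampSys σ d')
    (fun v hv => by rw [clampSys_of_not_mem σ d hv, clampSys_of_not_mem σ d' hv]) hu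
    (fun c hc v hcv _ hvu => ?_) fun _ _ _ => rfl
  rcases hc with hcR | rfl
  · refine ⟨σ ⟨c, hcR⟩, fun _ _ => ?_, fun _ _ => ?_⟩ <;>
      rw [clampSys_of_mem _ _ (.inl hcR), clampVal_of_mem_requisite _ _ hcR]
  · exact (hDu (.head hcv (reflTransGen_edge_of_edgeOff hvu))).elim

theorem freeVal_congr (σ d d') {ε ε' : ∀ v, M.ExoDom v} {r : V} (hr : r ∈ M.requisite)
    (hεr : ε r = ε' r)
    (hpar : ∀ p, M.Edge p r → p ∉ M.clamped →
      M.sol (M.clampSys σ d) ε p = M.sol (M.clampSys σ d') ε' p) :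
    M.freeVal σ d r ε = M.freeVal σ d' r ε' := by
  rw [freeVal, freeVal, hεr]
  refine M.localDep r _ _ (ε' r) fun p hpr => ?_
  by_cases hp : p ∈ M.clamped
  · rcases hp with hpR | rfl
    · rw [sol_clampSys_of_mem _ _ _ (.inl hpR), sol_clampSys_of_mem _ _ _ (.inl hpR),
        clampVal_of_mem_requisite _ _ hpR, clampVal_of_mem_requisite _ _ hpR]
    · exact (M.edge_asymm hpr hr.1).elim
  · exact hpar p hpr hp

theorem sol_clampSys_congr_of_utilConnected (σ d) {ε ε' : ∀ v, M.ExoDom v} {u : V}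
    (hu : M.UtilConnected u) (hεε' : ∀ v ∈ M.utilCoords, ε v = ε' v) :
    M.sol (M.clampSys σ d) ε u = M.sol (M.clampSys σ d) ε' u :=
  sol_clampSys_congr_exo σ d hu.not_clamped fun v _ hvu => hεε' v (.inl (hu.of_reflTransGen hvu))

theorem freeVal_congr_of_linked (σ d) {ε ε' : ∀ v, M.ExoDom v} {r : V} (hr : r ∈ M.requisite)
    (hlinked : M.Linked r) (hεε' : ∀ v ∈ M.utilCoords, ε v = ε' v) :
    M.freeVal σ d r ε = M.freeVal σ d r ε' := by
  refine freeVal_congr σ d d hr (hεε' r (.inr ⟨hr, hlinked⟩)) fun p hpr hp => ?_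
  obtain ⟨p₀, hp₀r, hp₀⟩ := hlinked
  -- all parents of `r` are connected to each other through the collider `r`
  exact sol_clampSys_congr_of_utilConnected σ d (hp₀.moral hp₀r hr hpr hp) hεε'

theorem sol_clampSys_congr_of_nonrequisite (σ d) {ε ε' : ∀ v, M.ExoDom v} {Y : V}
    (hY : Y ∈ M.nonrequisite) (hεε' : ∀ v ∈ M.obsCoords, ε v = ε' v) :
    M.sol (M.clampSys σ d) ε Y = M.sol (M.clampSys σ d) ε' Y :=
  have hYrel : Y ∈ M.relevant := ⟨Y, .inl (.inl hY), .refl⟩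
  sol_clampSys_congr_exo σ d (not_clamped_of_mem_nonrequisite hY) fun v hv hvY =>
    hεε' v (.inl ⟨hv, not_utilConnected_of_reflTransGen hYrel
      (not_utilConnected_of_mem_nonrequisite hY) hvY⟩)

theorem freeVal_congr_of_not_linked (σ d) {ε ε' : ∀ v, M.ExoDom v} {r : V}
    (hr : r ∈ M.requisite) (hlinked : ¬ M.Linked r)
    (hεε' : ∀ v ∈ M.obsCoords, ε v = ε' v) :
    M.freeVal σ d r ε = M.freeVal σ d r ε' := by
  refine freeVal_congr σ d d hr (hεε' r (.inr ⟨hr, hlinked⟩)) fun p hpr hp => ?_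
  have hprel : p ∈ M.relevant :=
    ⟨r, .inr hr, .single
      ⟨hpr, fun h => hp (.inr h), fun h => decision_not_mem_requisite (h ▸ hr)⟩⟩
  exact sol_clampSys_congr_exo σ d hp fun v hv hvp =>
    hεε' v (.inl ⟨hv,
      not_utilConnected_of_reflTransGen hprel (fun h => hlinked ⟨p, hpr, h⟩) hvp⟩)

theorem sol_clampSys_nonrequisite_congr_decision (σ d d' ε) {Y : V} (hY : Y ∈ M.nonrequisite) :
    M.sol (M.clampSys σ d) ε Y = M.sol (M.clampSys σ d') ε Y :=
  sol_clampSys_congr_decision σ d d' ε (not_clamped_of_mem_nonrequisite hY)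
    (M.not_reflTransGen_of_edge hY.1)

theorem freeVal_congr_decision (σ d d' ε) {r : V} (hr : r ∈ M.requisite) :
    M.freeVal σ d r ε = M.freeVal σ d' r ε :=
  freeVal_congr σ d d' hr rfl fun _ hpr hp => sol_clampSys_congr_decision σ d d' ε hp
    fun hDp => M.not_reflTransGen_of_edge hr.1 (hDp.tail hpr)

end Independence

section Factorization

variable (M : SCIM V)

theorem sum_Pjoint_mul_mul (s : Set V) (f g : (∀ v, M.ExoDom v) → ℝ)
    (hf : ∀ ε ε', (∀ v ∈ s, ε v = ε' v) → f ε = f ε')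
    (hg : ∀ ε ε', (∀ v ∉ s, ε v = ε' v) → g ε = g ε') :
    ∑ ε ∈ M.exoElems, M.Pjoint ε * (f ε * g ε) =
      (∑ ε ∈ M.exoElems, M.Pjoint ε * f ε) * ∑ ε ∈ M.exoElems, M.Pjoint ε * g ε :=
  sum_pi_weight_mul_mul M.P M.Psum s f g hf hg

def downUtil (d : M.Dom M.D) (ε : ∀ v, M.ExoDom v) : ℝ :=
  ∑ u ∈ M.Util,
    if ReflTransGen M.Edge M.D u then M.utilReal u (M.sol (M.doDecision d) ε u) else 0

def clampedDownUtil (σ : M.ReqVal) (d : M.Dom M.D) (ε : ∀ v, M.ExoDom v) : ℝ :=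
  ∑ u ∈ M.Util,
    if ReflTransGen M.Edge M.D u then M.utilReal u (M.sol (M.clampSys σ d) ε u) else 0

def ObsConsistent (ρ : M.ObsVal) (d : M.Dom M.D) (ε : ∀ v, M.ExoDom v) : Prop :=
  (∀ r (hr : r ∈ M.requisite), ¬ M.Linked r →
    M.freeVal (M.reqPart ρ) d r ε = ρ ⟨r, hr.1⟩) ∧
  ∀ Y (hY : Y ∈ M.nonrequisite), M.sol (M.clampSys (M.reqPart ρ) d) ε Y = ρ ⟨Y, hY.1⟩

def LinkedConsistent (σ : M.ReqVal) (d : M.Dom M.D) (ε : ∀ v, M.ExoDom v) : Prop :=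
  ∀ r (hr : r ∈ M.requisite), M.Linked r → M.freeVal σ d r ε = σ ⟨r, hr⟩

variable {M}

theorem obsConsistent_congr_exo (ρ d) {ε ε' : ∀ v, M.ExoDom v}
    (hεε' : ∀ v ∈ M.obsCoords, ε v = ε' v) :
    M.ObsConsistent ρ d ε ↔ M.ObsConsistent ρ d ε' := by
  refine and_congr (forall₂_congr fun r hr => imp_congr_right fun hr' => ?_)
    (forall₂_congr fun Y hY => ?_)
  · rw [freeVal_congr_of_not_linked _ d hr hr' hεε']
  · rw [sol_clampSys_congr_of_nonrequisite _ d hY hεε']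

theorem obsConsistent_congr_decision (ρ d d' ε) :
    M.ObsConsistent ρ d ε ↔ M.ObsConsistent ρ d' ε := by
  refine and_congr (forall₂_congr fun r hr => imp_congr_right fun _ => ?_)
    (forall₂_congr fun Y hY => ?_)
  · rw [freeVal_congr_decision _ d d' ε hr]
  · rw [sol_clampSys_nonrequisite_congr_decision _ d d' ε hY]

theorem linkedConsistent_congr_exo (σ d) {ε ε' : ∀ v, M.ExoDom v}
    (hεε' : ∀ v ∈ M.utilCoords, ε v = ε' v) :
    M.LinkedConsistent σ d ε ↔ M.LinkedConsistent σ d ε' :=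
  forall₂_congr fun _ hr => imp_congr_right fun hl => by
    rw [freeVal_congr_of_linked σ d hr hl hεε']

theorem clampedDownUtil_congr_exo (σ d) {ε ε' : ∀ v, M.ExoDom v}
    (hεε' : ∀ v ∈ M.utilCoords, ε v = ε' v) :
    M.clampedDownUtil σ d ε = M.clampedDownUtil σ d ε' := by
  refine Finset.sum_congr rfl fun u hu => ?_
  split_ifs with hDu
  · rw [sol_clampSys_congr_of_utilConnected σ d (.util ⟨hu, hDu⟩) hεε']
  · rfl

theorem obsVal_eq_iff_consistent (ρ : M.ObsVal) (d ε) :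
    M.obsVal ε = ρ ↔ M.ObsConsistent ρ d ε ∧ M.LinkedConsistent (M.reqPart ρ) d ε := by
  rw [obsVal_eq_iff ρ d ε, ObsConsistent, LinkedConsistent]
  constructor
  · rintro ⟨hR, hN⟩
    exact ⟨⟨fun r hr _ => hR r hr, hN⟩, fun r hr _ => hR r hr⟩
  · rintro ⟨⟨hR, hN⟩, hL⟩
    exact ⟨fun r hr => (em (M.Linked r)).elim (hL r hr) (hR r hr), hN⟩

theorem ite_obsVal_eq_mul (ρ : M.ObsVal) (d ε) :
    (if M.obsVal ε = ρ then M.downUtil d ε else 0) =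
      (if M.ObsConsistent ρ d ε then 1 else 0) *
        if M.LinkedConsistent (M.reqPart ρ) d ε then M.clampedDownUtil (M.reqPart ρ) d ε
        else 0 := by
  by_cases hO : M.ObsConsistent ρ d ε <;> by_cases hL : M.LinkedConsistent (M.reqPart ρ) d ε
  · have hσ : ∀ r (hr : r ∈ M.requisite),
        M.freeVal (M.reqPart ρ) d r ε = M.reqPart ρ ⟨r, hr⟩ :=
      ((obsVal_eq_iff ρ d ε).1 ((obsVal_eq_iff_consistent ρ d ε).2 ⟨hO, hL⟩)).1
    rw [if_pos ((obsVal_eq_iff_consistent ρ d ε).2 ⟨hO, hL⟩), if_pos hO, if_pos hL, one_mul,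
      downUtil, clampedDownUtil, sol_doDecision_eq_sol_clampSys_of_freeVal hσ]
  all_goals simp [obsVal_eq_iff_consistent ρ d ε, hO, hL]

variable (M)

def utilMass (ρ : M.ObsVal) (e : M.ExoDom M.D) (d : M.Dom M.D) : ℝ :=
  ∑ ε ∈ M.exoElems with M.obsVal ε = ρ ∧ ε M.D = e, M.Pjoint ε * M.downUtil d ε

def obsWeight (ρ : M.ObsVal) (e : M.ExoDom M.D) : ℝ :=
  ∑ ε ∈ M.exoElems,
    M.Pjoint ε * if ε M.D = e ∧ M.ObsConsistent ρ (M.dflt M.D) ε then 1 else 0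

def utilValue (σ : M.ReqVal) (d : M.Dom M.D) : ℝ :=
  ∑ ε ∈ M.exoElems,
    M.Pjoint ε * if M.LinkedConsistent σ d ε then M.clampedDownUtil σ d ε else 0

variable {M}

theorem obsWeight_nonneg (ρ e) : 0 ≤ M.obsWeight ρ e :=
  Finset.sum_nonneg fun ε _ => mul_nonneg (Finset.prod_nonneg fun v _ => M.Pnonneg v (ε v))
    (by split_ifs <;> norm_num)

/-- The conditional independence of the downstream utilities from the nonrequisite observations,
given the requisite ones and the decision. -/
theorem utilMass_eq (ρ : M.ObsVal) (e d) :
    M.utilMass ρ e d = M.obsWeight ρ e * M.utilValue (M.reqPart ρ) d := by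
  have hpoint : ∀ ε, (if M.obsVal ε = ρ ∧ ε M.D = e then M.downUtil d ε else 0) =
      (if ε M.D = e ∧ M.ObsConsistent ρ (M.dflt M.D) ε then 1 else 0) *
        if M.LinkedConsistent (M.reqPart ρ) d ε then M.clampedDownUtil (M.reqPart ρ) d ε
        else 0 := fun ε => by
    rw [obsConsistent_congr_decision ρ _ d]
    by_cases he : ε M.D = e
    · simpa [he] using ite_obsVal_eq_mul ρ d ε
    · simp [he]
  calc M.utilMass ρ e d
      = ∑ ε ∈ M.exoElems, M.Pjoint ε *
          if M.obsVal ε = ρ ∧ ε M.D = e then M.downUtil d ε else 0 := by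
        simp only [utilMass, Finset.sum_filter, mul_ite, mul_zero]
    _ = _ := by
      simp only [hpoint]
      refine M.sum_Pjoint_mul_mul (insert M.D M.obsCoords) _ _
        (fun ε ε' h => ?_) fun ε ε' h => ?_
      · rw [h M.D (Set.mem_insert _ _),
          obsConsistent_congr_exo ρ _ fun v hv => h v (Set.mem_insert_of_mem _ hv)]
      · have hu : ∀ v ∈ M.utilCoords, ε v = ε' v := fun v hv => h v <| by
          rintro (rfl | hv')
          exacts [decision_not_mem_utilCoords hv, not_mem_utilCoords_of_mem_obsCoords hv' hv]
        rw [linkedConsistent_congr_exo _ d hu, clampedDownUtil_congr_exo _ d hu]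

end Factorization

section Optimality

variable (M : SCIM V)

def upstreamUtil (ε : ∀ v, M.ExoDom v) : ℝ :=
  ∑ u ∈ M.Util, if ReflTransGen M.Edge M.D u then 0 else M.utilReal u (M.sol M.f ε u)

variable {M}

theorem totalU_sol_gpol {π} (hπ : M.IsPolicy π) (ε) :
    M.TotalU (M.sol (M.gpol π) ε) =
      M.upstreamUtil ε + M.downUtil (π (M.sol M.f ε) (ε M.D)) ε := by
  rw [TotalU, upstreamUtil, downUtil, ← Finset.sum_add_distrib, ← sol_gpol_decision hπ,
    ← sol_gpol_eq_sol_doDecision hπ]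
  refine Finset.sum_congr rfl fun u _ => ?_
  split_ifs with hDu
  · rw [zero_add]
  · rw [add_zero, sol_gpol_of_not_reflTransGen_decision hπ ε hDu]

theorem IsPolicy.apply_eq_apply_extendObs {π} (hπ : M.IsPolicy π) {ρ : M.ObsVal} {ε}
    (hρ : M.obsVal ε = ρ) (e) :
    π (M.sol M.f ε) e = π (M.extendObs ρ) e :=
  hπ _ _ e fun p hp => by rw [extendObs, dif_pos hp, ← hρ]; rfl

theorem EU_eq {π} (hπ : M.IsPolicy π) :
    M.EU π = ∑ ε ∈ M.exoElems, M.Pjoint ε * M.upstreamUtil ε +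
      ∑ ρ, ∑ e, M.utilMass ρ e (π (M.extendObs ρ) e) := by
  simp only [EU, EUg, totalU_sol_gpol hπ, mul_add, Finset.sum_add_distrib, add_right_inj]
  rw [← Finset.sum_fiberwise M.exoElems (fun ε => (M.obsVal ε, ε M.D)), Fintype.sum_prod_type]
  refine Finset.sum_congr rfl fun ρ _ => Finset.sum_congr rfl fun e _ => ?_
  refine Finset.sum_congr (by simp) fun ε hε => ?_
  obtain ⟨hρ, he⟩ := (Finset.mem_filter.1 hε).2
  rw [hπ.apply_eq_apply_extendObs hρ, he]

variable (M)

def bestDecision (σ : M.ReqVal) : M.Dom M.D := (Finite.exists_max (M.utilValue σ)).choose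

def bestPolicy (a : (p : V) → M.Dom p) (_ : M.ExoDom M.D) : M.Dom M.D :=
  M.bestDecision fun r => a r

theorem isPolicy_bestPolicy : M.IsPolicy M.bestPolicy := fun _ _ _ h =>
  congrArg M.bestDecision (funext fun r => h r r.2.1)

theorem isOptimal_bestPolicy : M.IsOptimal M.bestPolicy := by
  refine ⟨M.isPolicy_bestPolicy, fun π hπ => ?_⟩
  rw [EU_eq hπ, EU_eq M.isPolicy_bestPolicy, add_le_add_iff_left]
  refine Finset.sum_le_sum fun ρ _ => Finset.sum_le_sum fun e _ => ?_
  have hbest : M.bestPolicy (M.extendObs ρ) e = M.bestDecision (M.reqPart ρ) :=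
    congrArg M.bestDecision (funext fun r => dif_pos r.2.1)
  rw [utilMass_eq, utilMass_eq, hbest]
  exact mul_le_mul_of_nonneg_left
    ((Finite.exists_max (M.utilValue (M.reqPart ρ))).choose_spec _) (obsWeight_nonneg ρ e)

end Optimality

end SCIM

/-- existence of a minimal-reduction-respecting optimal policy:
every single-decision SCIM has an optimal policy that depends only on its
requisite observations, i.e. whose value is unchanged whenever the two input
assignments agree on all requisite parents of the decision. -/
theorem exists_reduced_optimal_policy {V : Type} [Fintype V] [DecidableEq V]
    (M : SCIM V) :
    ∃ π, M.IsOptimal π ∧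
      ∀ a a' e, (∀ p, RequisiteG M.Edge M.D (↑M.Util) p → a p = a' p) →
        π a e = π a' e :=
  ⟨M.bestPolicy, M.isOptimal_bestPolicy, fun _ _ _ h =>
    congrArg M.bestDecision (funext fun r => h r r.2)⟩
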